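/- arXiv:1704.01265 — 3 statements merged into one kernel-verified Lean document; each statement's English description precedes it below -/
import Mathlib

section
/- For matrices U ∈ ℝ^{p×r} and V ∈ ℝ^{q×r}, the nuclear norm of X = U Vᵀ satisfies ‖U Vᵀ‖_* ≤ (‖U‖_F² + ‖V‖_F²)/2. -/
open Matrix

noncomputable def singularValues {m n : Type*} [Fintype m] [Fintype n] [DecidableEq n]
    (X : Matrix m n ℝ) : n → ℝ :=
  fun i => Real.sqrt ((show (Xᵀ * X).IsHermitian by
    simpa using Matrix.isHermitian_conjTranspose_mul_self X).eigenvalues i)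

noncomputable def nuclearNorm {m n : Type*} [Fintype m] [Fintype n] [DecidableEq n]
    (X : Matrix m n ℝ) : ℝ := ∑ i, singularValues X i

noncomputable def frobNorm {m n : Type*} [Fintype m] [Fintype n] (X : Matrix m n ℝ) : ℝ :=
  Real.sqrt ((Xᵀ * X).trace)

noncomputable def matSpectralNorm {m n : Type*} [Fintype m] [Fintype n] [DecidableEq m] [DecidableEq n]
    (X : Matrix m n ℝ) : ℝ :=
  ‖LinearMap.toContinuousLinearMap (Matrix.toEuclideanLin X)‖

noncomputable def smallestNonzeroSV {m n : Type*} [Fintype m] [Fintype n] [DecidableEq n]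
    (X : Matrix m n ℝ) : ℝ :=
  sInf {s | (∃ i, singularValues X i = s) ∧ s ≠ 0}

noncomputable def distO {n r : ℕ} (W₁ W₂ : Matrix (Fin n) (Fin r) ℝ) : ℝ :=
  sInf {d | ∃ R : Matrix (Fin r) (Fin r) ℝ, Rᵀ * R = 1 ∧ d = frobNorm (W₁ - W₂ * R)}

/-! Let `vᵢ` be orthonormal eigenvectors of `XᵀX` for `X = UVᵀ`, with eigenvalues `σᵢ²`, and put
`uᵢ = Xvᵢ / σᵢ` when `σᵢ ≠ 0`; these `uᵢ` are orthonormal too. Then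
`σᵢ = uᵢ ⬝ Xvᵢ = Uᵀuᵢ ⬝ Vᵀvᵢ ≤ (|Uᵀuᵢ|² + |Vᵀvᵢ|²) / 2`, and summing over `i`, Bessel's
inequality applied to each column of `U` (resp. `V`) bounds `∑ |Uᵀuᵢ|²` by `‖U‖_F²`
(resp. `∑ |Vᵀvᵢ|²` by `‖V‖_F²`). -/

section Bessel
variable {ι m n : Type*} [Fintype ι] [Fintype m] [Fintype n]

theorem two_mul_dotProduct_le (a b : n → ℝ) : 2 * (a ⬝ᵥ b) ≤ a ⬝ᵥ a + b ⬝ᵥ b := by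
  have := dotProduct_self_star_nonneg (a - b)
  simp only [star_trivial, sub_dotProduct, dotProduct_sub, dotProduct_comm b a] at this
  linarith

theorem sum_sq_dotProduct_le_dotProduct_self [DecidableEq ι] (u : ι → m → ℝ)
    (hu : ∀ i j, u i ⬝ᵥ u j = if i = j then 1 else 0) (x : m → ℝ) :
    ∑ i, (u i ⬝ᵥ x) ^ 2 ≤ x ⬝ᵥ x := by
  have hv : Orthonormal ℝ fun i => (WithLp.toLp 2 (u i) : EuclideanSpace ℝ m) :=
    orthonormal_iff_ite.mpr fun i j => by
      simpa [EuclideanSpace.inner_toLp_toLp, dotProduct_comm] using hu i j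
  have := hv.sum_inner_products_le (E := EuclideanSpace ℝ m) (WithLp.toLp 2 x) (s := Finset.univ)
  rw [← real_inner_self_eq_norm_sq (WithLp.toLp 2 x : EuclideanSpace ℝ m)] at this
  simpa only [EuclideanSpace.inner_toLp_toLp, Real.norm_eq_abs, sq_abs, star_trivial,
    dotProduct_comm x] using this

theorem frobNorm_sq (M : Matrix m n ℝ) : frobNorm M ^ 2 = ∑ k, Mᵀ k ⬝ᵥ Mᵀ k := by
  rw [frobNorm, Real.sq_sqrt]
  · rfl
  · exact Finset.sum_nonneg fun k _ => dotProduct_self_star_nonneg (Mᵀ k)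

theorem sum_dotProduct_transpose_mulVec_le_frobNorm_sq [DecidableEq ι] (M : Matrix m n ℝ)
    (u : ι → m → ℝ) (hu : ∀ i j, u i ⬝ᵥ u j = if i = j then 1 else 0) :
    ∑ i, (Mᵀ *ᵥ u i) ⬝ᵥ (Mᵀ *ᵥ u i) ≤ frobNorm M ^ 2 := by
  calc ∑ i, (Mᵀ *ᵥ u i) ⬝ᵥ (Mᵀ *ᵥ u i) = ∑ k, ∑ i, (u i ⬝ᵥ Mᵀ k) ^ 2 := by
        rw [Finset.sum_comm]
        simp only [dotProduct, mulVec, sq, mul_comm]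
      _ ≤ ∑ k, Mᵀ k ⬝ᵥ Mᵀ k :=
        Finset.sum_le_sum fun k _ => sum_sq_dotProduct_le_dotProduct_self u hu _
      _ = frobNorm M ^ 2 := (frobNorm_sq M).symm

end Bessel

theorem Matrix.isHermitian_transpose_mul_self {m n : Type*} [Fintype m] (X : Matrix m n ℝ) :
    (Xᵀ * X).IsHermitian := by
  simpa using isHermitian_conjTranspose_mul_self X

section SingularVectors
variable {m n : Type*} [Fintype m] [Fintype n] [DecidableEq n] (X : Matrix m n ℝ)

noncomputable def rightSingularVector (i : n) : n → ℝ :=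
  (isHermitian_transpose_mul_self X).eigenvectorBasis i

-- When `σᵢ = 0` this is `0`, since `0⁻¹ = 0`.
noncomputable def leftSingularVector (i : n) : m → ℝ :=
  (singularValues X i)⁻¹ • (X *ᵥ rightSingularVector X i)

theorem rightSingularVector_dotProduct (i j : n) :
    rightSingularVector X i ⬝ᵥ rightSingularVector X j = if i = j then 1 else 0 := by
  simpa [rightSingularVector, EuclideanSpace.inner_eq_star_dotProduct, dotProduct_comm] using
    orthonormal_iff_ite.mp (isHermitian_transpose_mul_self X).eigenvectorBasis.orthonormal i j

theorem mulVec_rightSingularVector_dotProduct (i j : n) :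
    (X *ᵥ rightSingularVector X i) ⬝ᵥ (X *ᵥ rightSingularVector X j) =
      if i = j then singularValues X i ^ 2 else 0 := by
  set hA := isHermitian_transpose_mul_self X
  have h : ∀ i j, (X *ᵥ rightSingularVector X i) ⬝ᵥ (X *ᵥ rightSingularVector X j) =
      if i = j then hA.eigenvalues i else 0 := by
    intro i j
    rw [dotProduct_comm, ← dotProduct_transpose_mulVec, mulVec_mulVec]
    unfold rightSingularVector
    rw [hA.mulVec_eigenvectorBasis, dotProduct_smul, smul_eq_mul, ← rightSingularVector,
      ← rightSingularVector, rightSingularVector_dotProduct]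
    split_ifs with hij <;> simp [hij]
  have hnonneg : 0 ≤ hA.eigenvalues i := by
    simpa using (h i i).symm.trans_ge (dotProduct_self_star_nonneg _)
  rw [h, singularValues, Real.sq_sqrt hnonneg]

theorem leftSingularVector_dotProduct (i j : {i // singularValues X i ≠ 0}) :
    leftSingularVector X i ⬝ᵥ leftSingularVector X j = if i = j then 1 else 0 := by
  simp only [leftSingularVector, smul_dotProduct, dotProduct_smul,
    mulVec_rightSingularVector_dotProduct, Subtype.ext_iff, smul_eq_mul]
  split_ifs with hij
  · rw [hij]; field_simp [j.2]
  · simp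

theorem leftSingularVector_dotProduct_mulVec (i : n) :
    leftSingularVector X i ⬝ᵥ (X *ᵥ rightSingularVector X i) = singularValues X i := by
  rw [leftSingularVector, smul_dotProduct, mulVec_rightSingularVector_dotProduct, if_pos rfl,
    smul_eq_mul]
  rcases eq_or_ne (singularValues X i) 0 with h | h
  · simp [h]
  · field_simp

theorem nuclearNorm_eq_sum_dotProduct :
    nuclearNorm X = ∑ i : {i // singularValues X i ≠ 0},
      leftSingularVector X i ⬝ᵥ (X *ᵥ rightSingularVector X i) := by
  simp only [leftSingularVector_dotProduct_mulVec]
  rw [nuclearNorm, ← Finset.sum_filter_ne_zero]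
  exact Finset.sum_subtype _ (by simp) _

end SingularVectors

theorem stmt0 {p q r : ℕ} (U : Matrix (Fin p) (Fin r) ℝ) (V : Matrix (Fin q) (Fin r) ℝ) :
    nuclearNorm (U * Vᵀ) ≤ (frobNorm U ^ 2 + frobNorm V ^ 2) / 2 := by
  set u := leftSingularVector (U * Vᵀ)
  set v := rightSingularVector (U * Vᵀ)
  have hu := sum_dotProduct_transpose_mulVec_le_frobNorm_sq U _
    (leftSingularVector_dotProduct (U * Vᵀ))
  have hv := sum_dotProduct_transpose_mulVec_le_frobNorm_sq V
    (fun i : {i // singularValues (U * Vᵀ) i ≠ 0} => v i)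
    fun i j => by simpa [Subtype.ext_iff] using rightSingularVector_dotProduct (U * Vᵀ) i j
  calc nuclearNorm (U * Vᵀ)
      = ∑ i : {i // singularValues (U * Vᵀ) i ≠ 0}, (Uᵀ *ᵥ u i) ⬝ᵥ (Vᵀ *ᵥ v i) := by
        rw [nuclearNorm_eq_sum_dotProduct]
        refine Finset.sum_congr rfl fun i _ => ?_
        rw [← mulVec_mulVec, dotProduct_mulVec, ← mulVec_transpose]
    _ ≤ ∑ i : {i // singularValues (U * Vᵀ) i ≠ 0},
          ((Uᵀ *ᵥ u i) ⬝ᵥ (Uᵀ *ᵥ u i) + (Vᵀ *ᵥ v i) ⬝ᵥ (Vᵀ *ᵥ v i)) / 2 :=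
        Finset.sum_le_sum fun i _ => by linarith [two_mul_dotProduct_le (Uᵀ *ᵥ u i) (Vᵀ *ᵥ v i)]
    _ ≤ (frobNorm U ^ 2 + frobNorm V ^ 2) / 2 := by
        rw [← Finset.sum_div, Finset.sum_add_distrib]
        gcongr
end

section
/- If X ∈ ℝ^{p×q} has compact SVD X = P Σ Qᵀ with rank r, then setting U = P √Σ and V = Q √Σ gives X = U Vᵀ and (‖U‖_F² + ‖V‖_F²)/2 = ‖X‖_*. -/
open Matrix

/-! The balanced factors are `U = P √S` and `V = Q √S`, and `Uᵀ U = Vᵀ V = S` gives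
`‖U‖_F² = ‖V‖_F² = tr S`. On the other side `Xᵀ X = (Q S Qᵀ)²` with `Q S Qᵀ` positive
semidefinite, so `Q S Qᵀ` is the square root of `Xᵀ X`, whose trace is the nuclear norm; by
cyclicity of the trace it equals `tr (S Qᵀ Q) = tr S`. -/

section

variable {m n k : Type*} [Fintype m] [Fintype n] [Fintype k]

open scoped MatrixOrder in
theorem trace_cfcSqrt_eq_sum_sqrt_eigenvalues [DecidableEq n] {A : Matrix n n ℝ}
    (hA : A.PosSemidef) : (CFC.sqrt A).trace = ∑ i, √(hA.1.eigenvalues i) := by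
  rw [CFC.sqrt_eq_cfc, cfc_nnreal_eq_real _ A, hA.1.cfc_eq, IsHermitian.cfc,
    Unitary.conjStarAlgAut_apply, trace_mul_cycle, hA.1.eigenvectorUnitary.2.1, one_mul,
    trace_diagonal]
  simp [Real.coe_toNNReal', max_eq_left (hA.eigenvalues_nonneg _)]

open scoped MatrixOrder in
theorem nuclearNorm_eq_trace_of_sq_eq [DecidableEq n] (X : Matrix m n ℝ) {B : Matrix n n ℝ}
    (hB : B.PosSemidef) (hB2 : B ^ 2 = Xᵀ * X) : nuclearNorm X = B.trace := by
  have hXX : (Xᵀ * X).PosSemidef := by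
    simpa only [conjTranspose_eq_transpose_of_trivial] using posSemidef_conjTranspose_mul_self X
  rw [← CFC.sqrt_sq B hB.nonneg, hB2, trace_cfcSqrt_eq_sum_sqrt_eigenvalues hXX]
  rfl

theorem nuclearNorm_mul_diagonal_mul_transpose [DecidableEq n] [DecidableEq k]
    {P : Matrix m k ℝ} {Q : Matrix n k ℝ} (hP : Pᵀ * P = 1) (hQ : Qᵀ * Q = 1) {d : k → ℝ}
    (hd : 0 ≤ d) : nuclearNorm (P * diagonal d * Qᵀ) = ∑ i, d i := by
  have hB : (Q * diagonal d * Qᵀ).PosSemidef := by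
    simpa only [conjTranspose_eq_transpose_of_trivial] using
      (posSemidef_diagonal_iff.2 hd).mul_mul_conjTranspose_same Q
  have hB2 : (Q * diagonal d * Qᵀ) ^ 2 = (P * diagonal d * Qᵀ)ᵀ * (P * diagonal d * Qᵀ) := by
    simp only [sq, transpose_mul, transpose_transpose, diagonal_transpose, Matrix.mul_assoc]
    rw [← Matrix.mul_assoc Qᵀ Q, ← Matrix.mul_assoc Pᵀ P, hP, hQ, Matrix.one_mul]
  rw [nuclearNorm_eq_trace_of_sq_eq _ hB hB2, trace_mul_cycle, hQ, Matrix.one_mul, trace_diagonal]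

theorem frobNorm_mul_diagonal_sqrt_sq [DecidableEq k] {W : Matrix m k ℝ} (hW : Wᵀ * W = 1)
    {d : k → ℝ} (hd : 0 ≤ d) : frobNorm (W * diagonal fun i => √(d i)) ^ 2 = ∑ i, d i := by
  have hgram : (W * diagonal fun i => √(d i))ᵀ * (W * diagonal fun i => √(d i)) = diagonal d := by
    rw [transpose_mul, diagonal_transpose, Matrix.mul_assoc, ← Matrix.mul_assoc Wᵀ, hW,
      Matrix.one_mul, diagonal_mul_diagonal]
    simp_rw [Real.mul_self_sqrt (hd _)]
  rw [frobNorm, hgram, trace_diagonal, Real.sq_sqrt (Finset.sum_nonneg fun i _ => hd i)]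

end

theorem mul_diagonal_mul_transpose_eq_balanced {m n k : Type*} [Fintype k] [DecidableEq k]
    (P : Matrix m k ℝ) (Q : Matrix n k ℝ) {d : k → ℝ} (hd : 0 ≤ d) :
    P * diagonal d * Qᵀ =
      (P * diagonal fun i => √(d i)) * (Q * diagonal fun i => √(d i))ᵀ := by
  simp only [transpose_mul, diagonal_transpose, Matrix.mul_assoc]
  rw [← Matrix.mul_assoc (diagonal _) (diagonal _), diagonal_mul_diagonal]
  simp_rw [Real.mul_self_sqrt (hd _)]

theorem stmt1 {p q r : ℕ} (X : Matrix (Fin p) (Fin q) ℝ)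
    (P : Matrix (Fin p) (Fin r) ℝ) (Q : Matrix (Fin q) (Fin r) ℝ)
    (S : Matrix (Fin r) (Fin r) ℝ)
    (hP : Pᵀ * P = 1) (hQ : Qᵀ * Q = 1)
    (hdiag : ∀ i j, i ≠ j → S i j = 0) (hpos : ∀ i, 0 < S i i)
    (hX : X = P * S * Qᵀ) :
    X = (P * S.map Real.sqrt) * (Q * S.map Real.sqrt)ᵀ ∧
      (frobNorm (P * S.map Real.sqrt) ^ 2 + frobNorm (Q * S.map Real.sqrt) ^ 2) / 2
        = nuclearNorm X := by
  obtain ⟨d, hd, rfl⟩ : ∃ d : Fin r → ℝ, 0 ≤ d ∧ S = diagonal d :=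
    ⟨S.diag, fun i => (hpos i).le, (IsDiag.diagonal_diag fun i j h => hdiag i j h).symm⟩
  subst hX
  rw [diagonal_map Real.sqrt_zero]
  refine ⟨mul_diagonal_mul_transpose_eq_balanced P Q hd, ?_⟩
  rw [frobNorm_mul_diagonal_sqrt_sq hP hd, frobNorm_mul_diagonal_sqrt_sq hQ hd,
    nuclearNorm_mul_diagonal_mul_transpose hP hQ hd]
  ring
end

section
/- Let W₁ = [U₁ᵀ V₁ᵀ]ᵀ and W₂ = [U₂ᵀ V₂ᵀ]ᵀ in ℝ^{(p+q)×r} both satisfy the balance condition UᵢᵀUᵢ = VᵢᵀVᵢ. Then ‖P_on(W₁W₁ᵀ − W₂W₂ᵀ)‖_F² ≤ ‖P_off(W₁W₁ᵀ − W₂W₂ᵀ)‖_F², i.e., ‖U₁U₁ᵀ − U₂U₂ᵀ‖_F² + ‖V₁V₁ᵀ − V₂V₂ᵀ‖_F² ≤ 2‖U₁V₁ᵀ − U₂V₂ᵀ‖_F². -/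
open Matrix

noncomputable def spectralNorm' {m n : Type*} [Fintype m] [Fintype n] [DecidableEq m] [DecidableEq n]
    (X : Matrix m n ℝ) : ℝ :=
  ‖LinearMap.toContinuousLinearMap (Matrix.toEuclideanLin X)‖

/-!
With `A = U₁ᵀU₂` and `B = V₁ᵀV₂`, expanding every squared Frobenius norm into traces of products
of the Gram matrices `UᵢᵀUᵢ = VᵢᵀVᵢ` gives the exact identity
`2‖U₁V₁ᵀ − U₂V₂ᵀ‖² − ‖U₁U₁ᵀ − U₂U₂ᵀ‖² − ‖V₁V₁ᵀ − V₂V₂ᵀ‖² = 2‖A − B‖²`,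
whose right-hand side is nonnegative.
-/

section TraceExpansion

variable {R m n k : Type*} [CommRing R] [Fintype m] [Fintype n] [Fintype k]

lemma trace_transpose_mul_mul_transpose (X Z : Matrix m k R) (Y W : Matrix n k R) :
    ((X * Yᵀ)ᵀ * (Z * Wᵀ)).trace = (Xᵀ * Z * (Wᵀ * Y)).trace := by
  rw [transpose_mul, transpose_transpose, Matrix.mul_assoc, trace_mul_comm, Matrix.mul_assoc,
    Matrix.mul_assoc, Matrix.mul_assoc]

lemma trace_transpose_mul_comm (A B : Matrix m n R) : (Aᵀ * B).trace = (Bᵀ * A).trace := by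
  rw [← trace_transpose, transpose_mul, transpose_transpose]

lemma trace_transpose_mul_self_sub (A B : Matrix m n R) :
    ((A - B)ᵀ * (A - B)).trace = (Aᵀ * A).trace + (Bᵀ * B).trace - 2 * (Aᵀ * B).trace := by
  rw [transpose_sub, Matrix.sub_mul, Matrix.mul_sub, Matrix.mul_sub, trace_sub, trace_sub,
    trace_sub, trace_transpose_mul_comm B A]
  ring

lemma trace_transpose_mul_self_mul_transpose_sub (X Z : Matrix m k R) (Y W : Matrix n k R) :
    ((X * Yᵀ - Z * Wᵀ)ᵀ * (X * Yᵀ - Z * Wᵀ)).trace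
      = (Xᵀ * X * (Yᵀ * Y)).trace + (Zᵀ * Z * (Wᵀ * W)).trace
        - 2 * (Xᵀ * Z * (Wᵀ * Y)).trace := by
  rw [trace_transpose_mul_self_sub, trace_transpose_mul_mul_transpose,
    trace_transpose_mul_mul_transpose, trace_transpose_mul_mul_transpose]

end TraceExpansion

lemma trace_transpose_mul_self_nonneg {m n : Type*} [Fintype m] [Fintype n] (X : Matrix m n ℝ) :
    0 ≤ (Xᵀ * X).trace := by
  simpa using (posSemidef_conjTranspose_mul_self X).trace_nonneg

lemma frobNorm_sq_s4 {m n : Type*} [Fintype m] [Fintype n] (X : Matrix m n ℝ) :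
    frobNorm X ^ 2 = (Xᵀ * X).trace :=
  Real.sq_sqrt (trace_transpose_mul_self_nonneg X)

lemma two_mul_frobNorm_sq_sub_of_balanced {p q r : Type*} [Fintype p] [Fintype q] [Fintype r]
    (U₁ U₂ : Matrix p r ℝ) (V₁ V₂ : Matrix q r ℝ)
    (hbal₁ : U₁ᵀ * U₁ = V₁ᵀ * V₁) (hbal₂ : U₂ᵀ * U₂ = V₂ᵀ * V₂) :
    2 * frobNorm (U₁ * V₁ᵀ - U₂ * V₂ᵀ) ^ 2
        - (frobNorm (U₁ * U₁ᵀ - U₂ * U₂ᵀ) ^ 2 + frobNorm (V₁ * V₁ᵀ - V₂ * V₂ᵀ) ^ 2)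
      = 2 * frobNorm (U₁ᵀ * U₂ - V₁ᵀ * V₂) ^ 2 := by
  have hU : U₂ᵀ * U₁ = (U₁ᵀ * U₂)ᵀ := by rw [transpose_mul, transpose_transpose]
  have hV : V₂ᵀ * V₁ = (V₁ᵀ * V₂)ᵀ := by rw [transpose_mul, transpose_transpose]
  rw [frobNorm_sq_s4, frobNorm_sq_s4, frobNorm_sq_s4, frobNorm_sq_s4,
    trace_transpose_mul_self_mul_transpose_sub, trace_transpose_mul_self_mul_transpose_sub,
    trace_transpose_mul_self_mul_transpose_sub, trace_transpose_mul_self_sub, ← hbal₁, ← hbal₂,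
    hU, hV]
  rw [trace_mul_comm (U₁ᵀ * U₂), trace_mul_comm (U₁ᵀ * U₂), trace_mul_comm (V₁ᵀ * V₂),
    trace_transpose_mul_comm (V₁ᵀ * V₂)]
  ring

theorem stmt4 {p q r : ℕ}
    (U₁ U₂ : Matrix (Fin p) (Fin r) ℝ) (V₁ V₂ : Matrix (Fin q) (Fin r) ℝ)
    (hbal₁ : U₁ᵀ * U₁ = V₁ᵀ * V₁) (hbal₂ : U₂ᵀ * U₂ = V₂ᵀ * V₂) :
    frobNorm (U₁ * U₁ᵀ - U₂ * U₂ᵀ) ^ 2 + frobNorm (V₁ * V₁ᵀ - V₂ * V₂ᵀ) ^ 2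
      ≤ 2 * frobNorm (U₁ * V₁ᵀ - U₂ * V₂ᵀ) ^ 2 := by
  have h := two_mul_frobNorm_sq_sub_of_balanced U₁ U₂ V₁ V₂ hbal₁ hbal₂
  linarith [sq_nonneg (frobNorm (U₁ᵀ * U₂ - V₁ᵀ * V₂))]
end
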